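/- Let p, q ≥ 2 be coprime integers and let G be the group with presentation ⟨u, v | u^q = v^p⟩. Then the set of trace triples {(tr ρ(u), tr ρ(v), tr ρ(uv)) : ρ a group homomorphism G → SL(2,ℂ)} is equal to the union of the abelian part {(t^p + t^{−p}, t^q + t^{−q}, t^{p+q} + t^{−(p+q)}) : t ∈ ℂ, t ≠ 0} and the irreducible part ⋃_{(k,l) ∈ 𝒜} {(2cos(kπ/q), 2cos(lπ/p), z) : z ∈ ℂ}, where 𝒜 is the set of pairs of integers (k,l) with 1 ≤ k ≤ q−1, 1 ≤ l ≤ p−1 and k ≡ l (mod 2). -/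

import Mathlib

/-!
A representation of `⟨u, v | u^q = v^p⟩` is a pair `A, B ∈ SL(2,ℂ)` with `A^q = B^p`.
If `A` and `B` have a common eigenvector, with eigenvalues `a` and `b`, then `a^q = b^p`,
and coprimality gives `t` with `a = t^p`, `b = t^q`; the traces of `A`, `B`, `AB` are then
`a + a⁻¹`, `b + b⁻¹`, `ab + (ab)⁻¹`. Otherwise `A^q = B^p` commutes with both `A` and `B`, so it
is a scalar `ε = ±1` (Schur's lemma in dimension two). A non-scalar `A ∈ SL(2,ℂ)` with `A^q = ε`
has an eigenvalue `α ≠ ±1` (otherwise `A = ±1 + N` with `N ≠ 0` nilpotent, and `A^q` is not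
scalar), hence `α = exp(kπi/q)` with `0 < k < q`, `ε = (-1)^k`; likewise `B` gives `l` with
`ε = (-1)^l`, whence `k ≡ l (mod 2)`. Conversely every point is realised by diagonal pairs
(abelian part) or by `A = diag(α, α⁻¹)` together with a matrix `B` of trace `β + β⁻¹` whose
off-diagonal entries are tuned so that `tr AB = z`: as `β ≠ β⁻¹` are roots of
`X^p = (-1)^l`, Cayley–Hamilton forces `B^p = (-1)^l`.
-/

/-- The single relator `u^q · v^{-p}` of the torus knot group `⟨u, v | u^q = v^p⟩`,
where `u = FreeGroup.of 0` and `v = FreeGroup.of 1`. -/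
def torusRels (p q : ℕ) : Set (FreeGroup (Fin 2)) :=
  {FreeGroup.of 0 ^ q * (FreeGroup.of 1 ^ p)⁻¹}

namespace TorusKnot

lemma exists_pow_eq_of_pow_eq_pow {G : Type*} [CommGroup G] {a b : G} {p q : ℕ}
    (hpq : p.Coprime q) (h : a ^ q = b ^ p) : ∃ t : G, t ^ p = a ∧ t ^ q = b := by
  obtain ⟨x, y, hxy⟩ := Nat.isCoprime_iff_coprime.mpr hpq
  have h' : a ^ (q : ℤ) = b ^ (p : ℤ) := by exact_mod_cast h
  refine ⟨a ^ x * b ^ y, ?_, ?_⟩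
  · rw [← zpow_natCast, mul_zpow, ← zpow_mul, ← zpow_mul, mul_comm y, zpow_mul b, ← h', ← zpow_mul,
      ← zpow_add, mul_comm (q : ℤ), hxy, zpow_one]
  · rw [← zpow_natCast, mul_zpow, ← zpow_mul, ← zpow_mul, mul_comm x, zpow_mul a, h', ← zpow_mul,
      ← zpow_add, mul_comm (p : ℤ), hxy, zpow_one]

lemma neg_one_pow_eq_neg_one_pow_iff {R : Type*} [Ring R] (h : (-1 : R) ≠ 1) {k l : ℕ} :
    (-1 : R) ^ k = (-1) ^ l ↔ k % 2 = l % 2 := by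
  rw [neg_one_pow_eq_pow_mod_two, neg_one_pow_eq_pow_mod_two (n := l)]
  refine ⟨fun hkl ↦ ?_, fun hkl ↦ by rw [hkl]⟩
  rcases Nat.mod_two_eq_zero_or_one k with hk | hk <;>
    rcases Nat.mod_two_eq_zero_or_one l with hl | hl <;> simp_all [eq_comm]

lemma exists_hom_torusRels_iff {H : Type*} [Group H] {p q : ℕ} (a b : H) :
    (∃ ρ : PresentedGroup (torusRels p q) →* H,
      ρ (PresentedGroup.of 0) = a ∧ ρ (PresentedGroup.of 1) = b) ↔ a ^ q = b ^ p := by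
  constructor
  · rintro ⟨ρ, rfl, rfl⟩
    have h := congrArg ρ (PresentedGroup.one_of_mem (rels := torusRels p q) rfl)
    simpa [mul_inv_eq_one, PresentedGroup.of] using h
  · intro h
    have hrel : ∀ r ∈ torusRels p q, FreeGroup.lift ![a, b] r = 1 := by
      rintro _ rfl
      simpa [mul_inv_eq_one] using h
    exact ⟨PresentedGroup.toGroup hrel, PresentedGroup.toGroup.of hrel,
      PresentedGroup.toGroup.of hrel⟩

open Matrix

section TwoByTwo

variable {K : Type*} [Field K] {A : Matrix (Fin 2) (Fin 2) K} {α : K} {v : Fin 2 → K}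

lemma mul_self_eq_trace_smul_sub_one (hA : A.det = 1) : A * A = A.trace • A - 1 := by
  have h := A.aeval_self_charpoly
  rw [charpoly_fin_two, hA] at h
  simp only [map_one, map_add, map_sub, map_mul, map_pow, Polynomial.aeval_X,
    Polynomial.aeval_C] at h
  rw [← sub_eq_zero, ← h, Algebra.algebraMap_eq_smul_one, smul_one_mul, sq]
  module

lemma eigenvalue_sq_sub_trace_mul_add_one (hA : A.det = 1) (hv : v ≠ 0) (h : A *ᵥ v = α • v) :
    α ^ 2 - A.trace * α + 1 = 0 := by
  have hα : Module.End.HasEigenvalue A.mulVecLin α :=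
    Module.End.hasEigenvalue_of_hasEigenvector ⟨Module.End.mem_eigenspace_iff.mpr h, hv⟩
  simpa [Module.End.hasEigenvalue_iff_isRoot_charpoly, charpoly_fin_two, hA] using hα

lemma exists_mulVec_eq_smul [IsAlgClosed K] (A : Matrix (Fin 2) (Fin 2) K) :
    ∃ (α : K) (v : Fin 2 → K), v ≠ 0 ∧ A *ᵥ v = α • v := by
  obtain ⟨α, hα⟩ := Module.End.exists_eigenvalue A.mulVecLin
  obtain ⟨v, hv, hv0⟩ := hα.exists_hasEigenvector
  exact ⟨α, v, hv0, Module.End.mem_eigenspace_iff.mp hv⟩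

lemma eigenvalue_ne_zero (hA : A.det = 1) (hv : v ≠ 0) (h : A *ᵥ v = α • v) : α ≠ 0 := by
  rintro rfl
  simpa using eigenvalue_sq_sub_trace_mul_add_one hA hv h

lemma trace_eq_eigenvalue_add_inv (hA : A.det = 1) (hv : v ≠ 0) (h : A *ᵥ v = α • v) :
    A.trace = α + α⁻¹ := by
  have hα := eigenvalue_ne_zero hA hv h
  field_simp
  linear_combination -eigenvalue_sq_sub_trace_mul_add_one hA hv h

lemma pow_mulVec_of_mulVec_eq_smul (h : A *ᵥ v = α • v) (n : ℕ) : A ^ n *ᵥ v = α ^ n • v := by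
  induction n with
  | zero => simp
  | succ n ih => rw [pow_succ, ← mulVec_mulVec, h, mulVec_smul, ih, smul_smul, pow_succ']

lemma exists_eq_smul_of_mulVec_eq_zero {N : Matrix (Fin 2) (Fin 2) K} (hN : N ≠ 0)
    {v w : Fin 2 → K} (hw : w ≠ 0) (hNv : N *ᵥ v = 0) (hNw : N *ᵥ w = 0) : ∃ c : K, v = c • w := by
  set E := LinearMap.ker N.mulVecLin
  have hw' : (⟨w, hNw⟩ : E) ≠ 0 := fun h ↦ hw (congrArg Subtype.val h)
  have hE : Module.finrank K E = 1 := by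
    have hlt : Module.finrank K E < 2 := by
      refine (Submodule.finrank_lt fun h ↦ hN ?_).trans_eq (by simp)
      exact toLin'.injective (by simpa [toLin'_apply'] using LinearMap.ker_eq_top.mp h)
    have hpos : 0 < Module.finrank K E := Module.finrank_pos_iff_exists_ne_zero.mpr ⟨_, hw'⟩
    omega
  obtain ⟨c, hc⟩ := (finrank_eq_one_iff_of_nonzero' _ hw').mp hE ⟨v, hNv⟩
  exact ⟨c, congrArg Subtype.val hc.symm⟩

lemma smul_one_add_pow_succ_of_mul_self_eq_zero {R : Type*} [Ring R] [Algebra K R] (c : K) {N : R}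
    (hN : N * N = 0) (n : ℕ) :
    (c • 1 + N) ^ (n + 1) = c ^ (n + 1) • (1 : R) + ((n + 1 : K) * c ^ n) • N := by
  induction n with
  | zero => simp
  | succ n ih =>
    rw [pow_succ, ih]
    simp only [add_mul, mul_add, smul_mul_assoc, mul_smul_comm, one_mul, mul_one, hN, smul_zero,
      add_zero]
    match_scalars <;> ring

lemma eq_smul_one_of_pow_eq_smul_one [CharZero K] (hA : A.det = 1) (hv : v ≠ 0)
    (hAv : A *ᵥ v = α • v) (hα : α ^ 2 = 1) {n : ℕ} (hn : n ≠ 0) {c : K} (hpow : A ^ n = c • 1) :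
    A = α • 1 := by
  have htr : A.trace = 2 * α := by
    rw [trace_eq_eigenvalue_add_inv hA hv hAv, inv_eq_of_mul_eq_one_right (by rwa [← sq])]
    ring
  set N := A - α • 1 with hN_def
  have hN : N * N = 0 := by
    have h := mul_self_eq_trace_smul_sub_one hA
    rw [htr] at h
    calc N * N = A * A - (2 * α) • A + α ^ 2 • 1 := by
          simp only [hN_def, sub_mul, mul_sub, smul_mul_assoc, mul_smul_comm, one_mul, mul_one]
          module
      _ = 0 := by rw [h, hα]; module
  have hc : c = α ^ n := by
    have h := pow_mulVec_of_mulVec_eq_smul hAv n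
    rw [hpow, smul_mulVec, one_mulVec] at h
    exact smul_left_injective K hv h
  obtain ⟨m, rfl⟩ : ∃ m, n = m + 1 := Nat.exists_eq_succ_of_ne_zero hn
  have h := smul_one_add_pow_succ_of_mul_self_eq_zero α hN m
  rw [show α • 1 + N = A by rw [hN_def]; abel, hpow, hc, left_eq_add] at h
  have hcoef : ((m + 1 : K) * α ^ m) ≠ 0 :=
    mul_ne_zero (Nat.cast_add_one_ne_zero m) (pow_ne_zero _ (eigenvalue_ne_zero hA hv hAv))
  exact sub_eq_zero.mp ((smul_eq_zero.mp h).resolve_left hcoef)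

lemma sub_inv_smul_pow_succ (hA : A.det = 1) {β : K} (hβ : β ≠ 0) (htr : A.trace = β + β⁻¹)
    (n : ℕ) :
    (β - β⁻¹) • A ^ (n + 1) = (β ^ (n + 1) - β⁻¹ ^ (n + 1)) • A - (β ^ n - β⁻¹ ^ n) • 1 := by
  induction n with
  | zero => simp
  | succ n ih =>
    rw [pow_succ, ← smul_mul_assoc, ih, sub_mul, smul_mul_assoc, mul_self_eq_trace_smul_sub_one hA,
      htr, smul_mul_assoc, one_mul]
    have hinv : β * β⁻¹ = 1 := mul_inv_cancel₀ hβ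
    match_scalars
    · linear_combination (β ^ n - β⁻¹ ^ n) * hinv
    · ring

lemma pow_eq_smul_one_of_trace (hA : A.det = 1) {β : K} (hβ : β - β⁻¹ ≠ 0)
    (htr : A.trace = β + β⁻¹) {n : ℕ} (hn : n ≠ 0) (hβn : β⁻¹ ^ n = β ^ n) : A ^ n = β ^ n • 1 := by
  have hβ0 : β ≠ 0 := by rintro rfl; simp at hβ
  have hinv : β * β⁻¹ = 1 := mul_inv_cancel₀ hβ0
  obtain ⟨m, rfl⟩ : ∃ m, n = m + 1 := Nat.exists_eq_succ_of_ne_zero hn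
  refine smul_right_injective _ hβ ?_
  dsimp only
  rw [sub_inv_smul_pow_succ hA hβ0 htr, hβn, sub_self, zero_smul, zero_sub]
  match_scalars
  linear_combination β * hβn + (β ^ m - β⁻¹ ^ m) * hinv

end TwoByTwo

def HasCommonEigenvector {K : Type*} [Field K] (A B : Matrix (Fin 2) (Fin 2) K) : Prop :=
  ∃ v : Fin 2 → K, v ≠ 0 ∧ (∃ a : K, A *ᵥ v = a • v) ∧ ∃ b : K, B *ᵥ v = b • v

lemma HasCommonEigenvector.symm {K : Type*} [Field K] {A B : Matrix (Fin 2) (Fin 2) K}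
    (h : HasCommonEigenvector A B) : HasCommonEigenvector B A :=
  let ⟨v, hv, ha, hb⟩ := h
  ⟨v, hv, hb, ha⟩

section Schur

variable {K : Type*} [Field K] [IsAlgClosed K] {A B C : Matrix (Fin 2) (Fin 2) K}

lemma hasCommonEigenvector_smul_one (c : K) (B : Matrix (Fin 2) (Fin 2) K) :
    HasCommonEigenvector (c • 1) B := by
  obtain ⟨b, v, hv, hb⟩ := exists_mulVec_eq_smul B
  exact ⟨v, hv, ⟨c, by rw [smul_mulVec, one_mulVec]⟩, b, hb⟩

lemma exists_eq_smul_one_of_commute (hA : Commute C A) (hB : Commute C B)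
    (h : ¬ HasCommonEigenvector A B) : ∃ γ : K, C = γ • 1 := by
  obtain ⟨γ, w, hw, hCw⟩ := exists_mulVec_eq_smul C
  refine ⟨γ, sub_eq_zero.mp (by_contra fun hN ↦ h ?_)⟩
  have hNw : (C - γ • 1) *ᵥ w = 0 := by rw [sub_mulVec, hCw, smul_mulVec, one_mulVec, sub_self]
  -- `ker (C - γ)` is a line through `w`, preserved by everything commuting with `C`
  have key (X : Matrix (Fin 2) (Fin 2) K) (hX : Commute C X) : ∃ c : K, X *ᵥ w = c • w := by
    refine exists_eq_smul_of_mulVec_eq_zero hN hw ?_ hNw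
    rw [mulVec_mulVec, (hX.sub_left ((Commute.one_left X).smul_left γ)).eq, ← mulVec_mulVec, hNw,
      mulVec_zero]
  exact ⟨w, hw, key A hA, key B hB⟩

end Schur

open Complex

lemma exp_mul_I_add_inv (θ : ℝ) :
    exp (θ * I) + (exp (θ * I))⁻¹ = ((2 * Real.cos θ : ℝ) : ℂ) := by
  rw [← exp_neg, ← neg_mul]
  push_cast
  rw [two_cos]

lemma exp_mul_I_sub_inv (θ : ℝ) :
    exp (θ * I) - (exp (θ * I))⁻¹ = 2 * Real.sin θ * I := by
  rw [← exp_neg, ← neg_mul, ofReal_sin, two_sin]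
  linear_combination (exp (θ * I) - exp (-θ * I)) * I_sq

lemma exp_pi_div_mul_I_pow (k : ℕ) {n : ℕ} (hn : n ≠ 0) :
    exp (((k * Real.pi / n : ℝ) : ℂ) * I) ^ n = (-1) ^ k := by
  rw [← exp_nat_mul, ← exp_pi_mul_I, ← exp_nat_mul]
  congr 1
  push_cast
  field_simp

lemma exists_eq_exp_of_pow_eq_one {α : ℂ} {n : ℕ} (hn : n ≠ 0) (h : α ^ (2 * n) = 1) :
    ∃ m < 2 * n, α = exp (((m * Real.pi / n : ℝ) : ℂ) * I) := by
  have : NeZero (2 * n) := ⟨by omega⟩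
  obtain ⟨m, hm, rfl⟩ := (isPrimitiveRoot_exp (2 * n) (by omega)).eq_pow_of_pow_eq_one h
  refine ⟨m, hm, ?_⟩
  rw [← exp_nat_mul]
  congr 1
  push_cast
  field_simp

lemma exists_cos_eq_cos {m n : ℕ} (hm0 : m ≠ 0) (hmn : m ≠ n) (hm : m < 2 * n) :
    ∃ k : ℕ, 0 < k ∧ k < n ∧ Real.cos (k * Real.pi / n) = Real.cos (m * Real.pi / n) ∧
      k % 2 = m % 2 := by
  rcases hmn.lt_or_gt with h | h
  · exact ⟨m, by omega, h, rfl, rfl⟩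
  · refine ⟨2 * n - m, by omega, by omega, ?_, by omega⟩
    have hn : (n : ℝ) ≠ 0 := by norm_cast; omega
    rw [← Real.cos_two_pi_sub]
    congr 1
    push_cast [hm.le]
    field_simp
    ring

lemma exists_add_inv_eq_two_cos {α : ℂ} {n : ℕ} (hn : n ≠ 0) (h : α ^ (2 * n) = 1)
    (hα : α ^ 2 ≠ 1) :
    ∃ k : ℕ, 0 < k ∧ k < n ∧ α + α⁻¹ = ((2 * Real.cos (k * Real.pi / n) : ℝ) : ℂ) ∧
      α ^ n = (-1) ^ k := by
  obtain ⟨m, hm, rfl⟩ := exists_eq_exp_of_pow_eq_one hn h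
  have hm0 : m ≠ 0 := by
    rintro rfl
    simp at hα
  have hmn : m ≠ n := by
    rintro rfl
    rw [show (m * Real.pi / m : ℝ) = Real.pi by field_simp, exp_pi_mul_I] at hα
    norm_num at hα
  obtain ⟨k, hk0, hkn, hcos, hpar⟩ := exists_cos_eq_cos hm0 hmn hm
  refine ⟨k, hk0, hkn, by rw [exp_mul_I_add_inv, hcos], ?_⟩
  rw [exp_pi_div_mul_I_pow m hn, neg_one_pow_eq_neg_one_pow_iff (by norm_num), hpar]

lemma exp_pi_div_mul_I_sub_inv_ne_zero {k n : ℕ} (hk : 0 < k) (hkn : k < n) :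
    exp (((k * Real.pi / n : ℝ) : ℂ) * I) - (exp (((k * Real.pi / n : ℝ) : ℂ) * I))⁻¹ ≠ 0 := by
  have hn : (0 : ℝ) < n := by norm_cast; omega
  have hsin : 0 < Real.sin (k * Real.pi / n) := by
    apply Real.sin_pos_of_pos_of_lt_pi (by positivity)
    rw [div_lt_iff₀ hn, mul_comm]
    gcongr
  rw [exp_mul_I_sub_inv]
  exact mul_ne_zero (mul_ne_zero two_ne_zero (mod_cast hsin.ne')) I_ne_zero

lemma inv_exp_pi_div_mul_I_pow (k : ℕ) {n : ℕ} (hn : n ≠ 0) :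
    (exp (((k * Real.pi / n : ℝ) : ℂ) * I))⁻¹ ^ n = (-1) ^ k := by
  rw [inv_pow, exp_pi_div_mul_I_pow k hn, ← inv_pow, inv_neg_one]

open Matrix.SpecialLinearGroup
open scoped MatrixGroups

section Diagonal

variable (K : Type*) [CommRing K]

def diagonalHom : Kˣ →* SL(2, K) where
  toFun t := ⟨!![(t : K), 0; 0, ↑t⁻¹], by simp⟩
  map_one' := by ext : 1; simp [one_fin_two]
  map_mul' s t := Subtype.ext <| by
    change _ = !![(s : K), 0; 0, ↑s⁻¹] * !![(t : K), 0; 0, ↑t⁻¹]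
    simp [mul_comm]

variable {K}

lemma trace_diagonalHom (t : Kˣ) :
    (diagonalHom K t : Matrix (Fin 2) (Fin 2) K).trace = t + ↑t⁻¹ :=
  trace_fin_two_of _ _ _ _

end Diagonal

section SpecialLinear

variable {K : Type*} [Field K]

lemma exists_pow_eq_pow_with_traces_of_ne_zero (p q : ℕ) {t : K} (ht : t ≠ 0) :
    ∃ A B : SL(2, K), A ^ q = B ^ p ∧ (A : Matrix (Fin 2) (Fin 2) K).trace = t ^ p + t⁻¹ ^ p ∧
      (B : Matrix (Fin 2) (Fin 2) K).trace = t ^ q + t⁻¹ ^ q ∧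
      (↑(A * B) : Matrix (Fin 2) (Fin 2) K).trace = t ^ (p + q) + t⁻¹ ^ (p + q) := by
  set u := Units.mk0 t ht
  refine ⟨diagonalHom K (u ^ p), diagonalHom K (u ^ q), ?_, ?_, ?_, ?_⟩
  · rw [← map_pow, ← map_pow, ← pow_mul, ← pow_mul, mul_comm]
  · rw [trace_diagonalHom]; simp [u]
  · rw [trace_diagonalHom]; simp [u]
  · rw [← map_mul, ← pow_add, trace_diagonalHom]; simp [u]

lemma exists_traces_eq_of_hasCommonEigenvector {p q : ℕ} (hpq : p.Coprime q) {A B : SL(2, K)}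
    (hrel : A ^ q = B ^ p) (h : HasCommonEigenvector (A : Matrix (Fin 2) (Fin 2) K) B) :
    ∃ t : K, t ≠ 0 ∧ (A : Matrix (Fin 2) (Fin 2) K).trace = t ^ p + t⁻¹ ^ p ∧
      (B : Matrix (Fin 2) (Fin 2) K).trace = t ^ q + t⁻¹ ^ q ∧
      (↑(A * B) : Matrix (Fin 2) (Fin 2) K).trace = t ^ (p + q) + t⁻¹ ^ (p + q) := by
  obtain ⟨v, hv, ⟨a, ha⟩, b, hb⟩ := h
  have hab : a ^ q = b ^ p := by
    have h := pow_mulVec_of_mulVec_eq_smul ha q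
    rw [← coe_pow, hrel, coe_pow, pow_mulVec_of_mulVec_eq_smul hb p] at h
    exact smul_left_injective K hv h.symm
  obtain ⟨u, hup, huq⟩ := exists_pow_eq_of_pow_eq_pow hpq
    (a := Units.mk0 a (eigenvalue_ne_zero A.det_coe hv ha))
    (b := Units.mk0 b (eigenvalue_ne_zero B.det_coe hv hb)) (Units.ext (by simpa using hab))
  replace hup : (u : K) ^ p = a := by simpa using congrArg Units.val hup
  replace huq : (u : K) ^ q = b := by simpa using congrArg Units.val huq
  have hAB : (↑(A * B) : Matrix (Fin 2) (Fin 2) K) *ᵥ v = (a * b) • v := by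
    rw [coe_mul, ← mulVec_mulVec, hb, mulVec_smul, ha, smul_smul, mul_comm]
  refine ⟨u, u.ne_zero, ?_, ?_, ?_⟩
  · rw [trace_eq_eigenvalue_add_inv A.det_coe hv ha, inv_pow, hup]
  · rw [trace_eq_eigenvalue_add_inv B.det_coe hv hb, inv_pow, huq]
  · rw [trace_eq_eigenvalue_add_inv (A * B).det_coe hv hAB, inv_pow, pow_add, hup, huq]

lemma exists_pow_eq_pow_of_sub_inv_ne_zero {α β : K} (hα : α - α⁻¹ ≠ 0) (hβ : β - β⁻¹ ≠ 0)
    {p q : ℕ} (hp : p ≠ 0) (hq : q ≠ 0) (hαq : α⁻¹ ^ q = α ^ q) (hβp : β⁻¹ ^ p = β ^ p)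
    (hαβ : α ^ q = β ^ p) (z : K) :
    ∃ A B : SL(2, K), A ^ q = B ^ p ∧ (A : Matrix (Fin 2) (Fin 2) K).trace = α + α⁻¹ ∧
      (B : Matrix (Fin 2) (Fin 2) K).trace = β + β⁻¹ ∧
      (↑(A * B) : Matrix (Fin 2) (Fin 2) K).trace = z := by
  have hα0 : α ≠ 0 := by rintro rfl; simp at hα
  -- `b` is chosen so that `tr (A * B) = α * b + α⁻¹ * c = z`
  set b := (z - α⁻¹ * (β + β⁻¹)) / (α - α⁻¹)
  set c := β + β⁻¹ - b
  let A : SL(2, K) := ⟨!![α, 0; 0, α⁻¹], by simp [det_fin_two_of, hα0]⟩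
  let B : SL(2, K) := ⟨!![b, 1; b * c - 1, c], by simp [det_fin_two_of]⟩
  have hA : (A : Matrix (Fin 2) (Fin 2) K).trace = α + α⁻¹ := trace_fin_two_of _ _ _ _
  have hB : (B : Matrix (Fin 2) (Fin 2) K).trace = β + β⁻¹ := by
    simp [B, c, trace_fin_two_of]
  refine ⟨A, B, Subtype.ext ?_, hA, hB, ?_⟩
  · rw [coe_pow, coe_pow, pow_eq_smul_one_of_trace A.det_coe hα hA hq hαq,
      pow_eq_smul_one_of_trace B.det_coe hβ hB hp hβp, hαβ]
  · have hb : (α - α⁻¹) * b = z - α⁻¹ * (β + β⁻¹) := mul_div_cancel₀ _ hα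
    rw [coe_mul]
    simp [A, B, c, trace_fin_two_of]
    linear_combination hb

end SpecialLinear

section Complex

lemma exists_trace_eq_two_cos {A : Matrix (Fin 2) (Fin 2) ℂ} (hA : A.det = 1) {n : ℕ} (hn : n ≠ 0)
    {ε : ℂ} (hpow : A ^ n = ε • 1) (hne : ∀ c : ℂ, A ≠ c • 1) :
    ∃ k : ℕ, 0 < k ∧ k < n ∧ A.trace = ((2 * Real.cos (k * Real.pi / n) : ℝ) : ℂ) ∧
      ε = (-1) ^ k := by
  obtain ⟨α, v, hv, hAv⟩ := exists_mulVec_eq_smul A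
  have hαn : α ^ n = ε := by
    have h := pow_mulVec_of_mulVec_eq_smul hAv n
    rw [hpow, smul_mulVec, one_mulVec] at h
    exact (smul_left_injective ℂ hv h).symm
  have hε : ε ^ 2 = 1 := by
    have h := congrArg det hpow
    rwa [det_pow, hA, one_pow, det_smul, det_one, mul_one, Fintype.card_fin, eq_comm] at h
  have hα : α ^ 2 ≠ 1 := fun h ↦ hne α (eq_smul_one_of_pow_eq_smul_one hA hv hAv h hn hpow)
  obtain ⟨k, hk, hkn, hcos, hαk⟩ :=
    exists_add_inv_eq_two_cos hn (by rw [mul_comm, pow_mul, hαn, hε]) hα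
  exact ⟨k, hk, hkn, by rw [trace_eq_eigenvalue_add_inv hA hv hAv, hcos], by rw [← hαn, hαk]⟩

lemma exists_traces_eq_two_cos_of_not_hasCommonEigenvector {p q : ℕ} (hp : p ≠ 0) (hq : q ≠ 0)
    {A B : SL(2, ℂ)} (hrel : A ^ q = B ^ p)
    (h : ¬ HasCommonEigenvector (A : Matrix (Fin 2) (Fin 2) ℂ) B) :
    ∃ k l : ℕ, 0 < k ∧ k < q ∧ 0 < l ∧ l < p ∧ k % 2 = l % 2 ∧
      (A : Matrix (Fin 2) (Fin 2) ℂ).trace = ((2 * Real.cos (k * Real.pi / q) : ℝ) : ℂ) ∧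
      (B : Matrix (Fin 2) (Fin 2) ℂ).trace = ((2 * Real.cos (l * Real.pi / p) : ℝ) : ℂ) := by
  have hrel' : (A : Matrix (Fin 2) (Fin 2) ℂ) ^ q = (B : Matrix (Fin 2) (Fin 2) ℂ) ^ p := by
    rw [← coe_pow, hrel, coe_pow]
  obtain ⟨ε, hε⟩ := exists_eq_smul_one_of_commute (Commute.self_pow _ q).symm
    (hrel' ▸ (Commute.self_pow _ p).symm) h
  obtain ⟨k, hk, hkq, hA, hεk⟩ := exists_trace_eq_two_cos A.det_coe hq hε
    fun c hc ↦ h (hc ▸ hasCommonEigenvector_smul_one c _)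
  obtain ⟨l, hl, hlp, hB, hεl⟩ := exists_trace_eq_two_cos B.det_coe hp (hrel' ▸ hε)
    fun c hc ↦ h (hc ▸ (hasCommonEigenvector_smul_one c _).symm)
  refine ⟨k, l, hk, hkq, hl, hlp, ?_, hA, hB⟩
  rw [← neg_one_pow_eq_neg_one_pow_iff (R := ℂ) (by norm_num), ← hεk, hεl]

lemma exists_pow_eq_pow_with_traces_two_cos {p q k l : ℕ} (hk : 0 < k) (hkq : k < q) (hl : 0 < l)
    (hlp : l < p) (hkl : k % 2 = l % 2) (z : ℂ) :
    ∃ A B : SL(2, ℂ), A ^ q = B ^ p ∧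
      (A : Matrix (Fin 2) (Fin 2) ℂ).trace = ((2 * Real.cos (k * Real.pi / q) : ℝ) : ℂ) ∧
      (B : Matrix (Fin 2) (Fin 2) ℂ).trace = ((2 * Real.cos (l * Real.pi / p) : ℝ) : ℂ) ∧
      (↑(A * B) : Matrix (Fin 2) (Fin 2) ℂ).trace = z := by
  have hp : p ≠ 0 := by omega
  have hq : q ≠ 0 := by omega
  obtain ⟨A, B, hAB, hA, hB, hz⟩ := exists_pow_eq_pow_of_sub_inv_ne_zero
    (exp_pi_div_mul_I_sub_inv_ne_zero hk hkq) (exp_pi_div_mul_I_sub_inv_ne_zero hl hlp) hp hq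
    (by rw [inv_exp_pi_div_mul_I_pow k hq, exp_pi_div_mul_I_pow k hq])
    (by rw [inv_exp_pi_div_mul_I_pow l hp, exp_pi_div_mul_I_pow l hp])
    (by rwa [exp_pi_div_mul_I_pow k hq, exp_pi_div_mul_I_pow l hp,
      neg_one_pow_eq_neg_one_pow_iff (by norm_num)]) z
  exact ⟨A, B, hAB, by rw [hA, exp_mul_I_add_inv], by rw [hB, exp_mul_I_add_inv], hz⟩

end Complex

end TorusKnot

open TorusKnot

/-- For the torus knot group `G = ⟨u, v | u^q = v^p⟩` with `p, q ≥ 2` coprime,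
the set of trace triples `(tr ρ(u), tr ρ(v), tr ρ(uv))` of `SL(2,ℂ)`-representations `ρ`
of `G` is the union of the abelian part, parametrized by `t ≠ 0`, and the irreducible
part, a union of lines indexed by the admissible pairs `(k, l)`. -/
theorem stmt_7 (p q : ℕ) (hp : 2 ≤ p) (hq : 2 ≤ q) (hpq : Nat.Coprime p q) :
    {x : ℂ × ℂ × ℂ |
        ∃ ρ : PresentedGroup (torusRels p q) →* Matrix.SpecialLinearGroup (Fin 2) ℂ,
          x = (Matrix.trace (ρ (PresentedGroup.of 0)).1,
               Matrix.trace (ρ (PresentedGroup.of 1)).1,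
               Matrix.trace (ρ (PresentedGroup.of 0 * PresentedGroup.of 1)).1)} =
    {x : ℂ × ℂ × ℂ | ∃ t : ℂ, t ≠ 0 ∧
        x = (t ^ p + t⁻¹ ^ p, t ^ q + t⁻¹ ^ q, t ^ (p + q) + t⁻¹ ^ (p + q))} ∪
    {x : ℂ × ℂ × ℂ | ∃ k l : ℕ, 1 ≤ k ∧ k ≤ q - 1 ∧ 1 ≤ l ∧ l ≤ p - 1 ∧ k % 2 = l % 2 ∧
        ∃ z : ℂ, x = (((2 * Real.cos (k * Real.pi / q) : ℝ) : ℂ),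
                      ((2 * Real.cos (l * Real.pi / p) : ℝ) : ℂ), z)} := by
  ext ⟨x, y, z⟩
  simp only [Set.mem_ofPred_eq, Set.mem_union, Prod.mk.injEq, map_mul]
  constructor
  · rintro ⟨ρ, rfl, rfl, rfl⟩
    have hrel := (exists_hom_torusRels_iff _ _).mp ⟨ρ, rfl, rfl⟩
    by_cases h : HasCommonEigenvector (ρ (PresentedGroup.of 0) : Matrix (Fin 2) (Fin 2) ℂ)
      (ρ (PresentedGroup.of 1))
    · exact Or.inl (exists_traces_eq_of_hasCommonEigenvector hpq hrel h)
    · obtain ⟨k, l, hk, hkq, hl, hlp, hkl, hA, hB⟩ :=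
        exists_traces_eq_two_cos_of_not_hasCommonEigenvector (by omega) (by omega) hrel h
      exact Or.inr ⟨k, l, hk, by omega, hl, by omega, hkl, _, hA, hB, rfl⟩
  · rintro (⟨t, ht, rfl, rfl, rfl⟩ | ⟨k, l, hk, hkq, hl, hlp, hkl, z, rfl, rfl, rfl⟩)
    · obtain ⟨A, B, hAB, hA, hB, hz⟩ := exists_pow_eq_pow_with_traces_of_ne_zero p q ht
      obtain ⟨ρ, rfl, rfl⟩ := (exists_hom_torusRels_iff A B).mpr hAB
      exact ⟨ρ, hA.symm, hB.symm, hz.symm⟩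
    · obtain ⟨A, B, hAB, hA, hB, hz⟩ :=
        exists_pow_eq_pow_with_traces_two_cos (p := p) (q := q) (by omega) (by omega) (by omega)
          (by omega) hkl z
      obtain ⟨ρ, rfl, rfl⟩ := (exists_hom_torusRels_iff A B).mpr hAB
      exact ⟨ρ, hA.symm, hB.symm, hz.symm⟩
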